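/- arXiv:1905.03536 — 4 statements merged into one kernel-verified Lean document; each statement's English description precedes it below -/
import Mathlib

section
/- Let a, b be complex numbers and U an open neighborhood of the line segment joining a to b. Then the function z ↦ log((z-b)/(z-a)) admits an analytic branch on the complement of U (more precisely, the Möbius transformation z ↦ (z-b)/(z-a) maps ℂ \ U into a simply connected open subset of ℂ \ {0}, so a holomorphic logarithm exists there). -/
/-!
If `z ∉ [a, b]` then `(z - b) / (z - a)` avoids the closed negative real axis: were it equal to
some real `t ≤ 0`, the vectors `z - a` and `b - z = -t (z - a)` would point the same way, which
puts `z` on the segment. So the principal logarithm composed with this Möbius map is holomorphic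
off the segment, and a fortiori off any `U ⊇ [a, b]`.
-/

open Complex Set

theorem mem_segment_of_sub_eq_smul_sub {E : Type*} [AddCommGroup E] [Module ℝ E] {a b z : E}
    {t : ℝ} (ht : t ≤ 0) (h : z - b = t • (z - a)) : z ∈ segment ℝ a b := by
  have hbz : b - z = (-t) • (z - a) := by rw [neg_smul, ← h, neg_sub]
  rw [mem_segment_iff_sameRay, hbz]
  exact SameRay.sameRay_nonneg_smul_right _ (neg_nonneg.2 ht)

theorem div_sub_sub_mem_slitPlane {a b z : ℂ} (hz : z ∉ segment ℝ a b) :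
    (z - b) / (z - a) ∈ slitPlane := by
  rw [mem_slitPlane_iff_not_le_zero]
  intro hle
  obtain ⟨hre, him⟩ := Complex.le_def.1 hle
  have hza : z - a ≠ 0 := sub_ne_zero.2 fun h => hz (h ▸ left_mem_segment ℝ a b)
  set w := (z - b) / (z - a)
  have hw : w = (w.re : ℂ) := Complex.ext rfl (by simpa using him)
  refine hz (mem_segment_of_sub_eq_smul_sub hre ?_)
  rw [Complex.real_smul, ← hw, div_mul_cancel₀ _ hza]

theorem differentiableOn_log_div_sub_sub (a b : ℂ) :
    DifferentiableOn ℂ (fun z => log ((z - b) / (z - a))) (segment ℝ a b)ᶜ := by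
  refine DifferentiableOn.clog ?_ fun z hz => div_sub_sub_mem_slitPlane hz
  refine (differentiableOn_id.sub_const b).div (differentiableOn_id.sub_const a) fun z hz => ?_
  exact sub_ne_zero.2 fun h => hz (h ▸ left_mem_segment ℝ a b)

theorem holomorphic_log_mobius_off_segment_general (a b : ℂ) (U : Set ℂ)
    (hseg : segment ℝ a b ⊆ U) :
    ∃ f : ℂ → ℂ, DifferentiableOn ℂ f Uᶜ ∧
      ∀ z ∈ Uᶜ, Complex.exp (f z) = (z - b) / (z - a) := by
  have hsub : Uᶜ ⊆ (segment ℝ a b)ᶜ := compl_subset_compl.2 hseg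
  refine ⟨fun z => log ((z - b) / (z - a)), (differentiableOn_log_div_sub_sub a b).mono hsub,
    fun z hz => ?_⟩
  exact exp_log (slitPlane_ne_zero (div_sub_sub_mem_slitPlane (hsub hz)))

/-- For `a b : ℂ` and an open set `U` containing the segment `[a, b]`, there is a
holomorphic branch of `log ((z - b)/(z - a))` on the complement of `U`. -/
theorem holomorphic_log_mobius_off_segment (a b : ℂ) (U : Set ℂ) (hU : IsOpen U)
    (hseg : segment ℝ a b ⊆ U) :
    ∃ f : ℂ → ℂ, DifferentiableOn ℂ f Uᶜ ∧
      ∀ z ∈ Uᶜ, Complex.exp (f z) = (z - b) / (z - a) :=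
  holomorphic_log_mobius_off_segment_general a b U hseg
end

section
/- Let A_ξ ∈ L(E) satisfy A_ξ + A_ξ* = 2Q(ξ − (2ϑ)^{-1})Q* with (A_ξ, Q) controllable. If ξ − (2ϑ)^{-1} > 0 (as a self-adjoint operator) then sp(A_ξ) is contained in the open right half-plane, and if ξ − (2ϑ)^{-1} < 0 then sp(A_ξ) is contained in the open left half-plane. In particular sp(A_ξ) ∩ iℝ = ∅. -/
/-!
For an eigenpair `A u = z u` one has `⟪u, (A + Aᴴ) u⟫ = 2 Re z ‖u‖²`, while the dissipation
identity rewrites the same quantity as `2 ⟪Qᴴ u, (ξ - (2ϑ)⁻¹) Qᴴ u⟫`. Controllability gives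
`Qᴴ u ≠ 0`, so the real part of this form has the strict sign of `ξ - (2ϑ)⁻¹`, and so does `Re z`.
The left half-plane case is the right half-plane case for `-A`.
-/

open Matrix
open scoped ComplexOrder

namespace Matrix

variable {𝕜 : Type*} [RCLike 𝕜] {n m : Type*} [Fintype n] [Fintype m]

theorem dotProduct_add_conjTranspose_mulVec_of_mulVec_eq_smul {A : Matrix n n 𝕜}
    {u : n → 𝕜} {z : 𝕜} (hu : A *ᵥ u = z • u) :
    star u ⬝ᵥ ((A + Aᴴ) *ᵥ u) = 2 * (RCLike.re z : 𝕜) * (star u ⬝ᵥ u) := by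
  have hadj : star u ⬝ᵥ (Aᴴ *ᵥ u) = star z * (star u ⬝ᵥ u) := by
    rw [dotProduct_mulVec, ← star_mulVec, hu, star_smul, smul_dotProduct, smul_eq_mul]
  rw [add_mulVec, dotProduct_add, hadj, hu, dotProduct_smul, smul_eq_mul, ← add_mul,
    RCLike.star_def, RCLike.add_conj]

theorem dotProduct_mul_mul_conjTranspose_mulVec {α : Type*} [CommRing α] [StarRing α]
    (Q : Matrix n m α) (M : Matrix m m α) (u : n → α) :
    star u ⬝ᵥ ((Q * M * Qᴴ) *ᵥ u) = star (Qᴴ *ᵥ u) ⬝ᵥ (M *ᵥ (Qᴴ *ᵥ u)) := by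
  rw [← mulVec_mulVec, ← mulVec_mulVec, dotProduct_mulVec, star_mulVec,
    conjTranspose_conjTranspose]

theorem re_pos_of_mulVec_eq_smul_of_add_conjTranspose_eq {A : Matrix n n 𝕜}
    {Q : Matrix n m 𝕜} {M : Matrix m m 𝕜} (hA : A + Aᴴ = Q * M * Qᴴ) (hM : M.PosDef)
    {u : n → 𝕜} {z : 𝕜} (hu : A *ᵥ u = z • u) (hQu : Qᴴ *ᵥ u ≠ 0) : 0 < RCLike.re z := by
  have hquad := dotProduct_add_conjTranspose_mulVec_of_mulVec_eq_smul hu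
  rw [hA, dotProduct_mul_mul_conjTranspose_mulVec] at hquad
  have hpos := hM.re_dotProduct_pos hQu
  have hnorm : 0 ≤ RCLike.re (star u ⬝ᵥ u) :=
    (RCLike.nonneg_iff.mp (dotProduct_star_self_nonneg u)).1
  rw [hquad, ← RCLike.ofReal_ofNat, ← RCLike.ofReal_mul, RCLike.re_ofReal_mul, mul_assoc] at hpos
  exact pos_of_mul_pos_left (pos_of_mul_pos_right hpos zero_le_two) hnorm

theorem re_neg_of_mulVec_eq_smul_of_add_conjTranspose_eq_neg {A : Matrix n n 𝕜}
    {Q : Matrix n m 𝕜} {M : Matrix m m 𝕜} (hA : A + Aᴴ = -(Q * M * Qᴴ)) (hM : M.PosDef)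
    {u : n → 𝕜} {z : 𝕜} (hu : A *ᵥ u = z • u) (hQu : Qᴴ *ᵥ u ≠ 0) : RCLike.re z < 0 := by
  have hnegA : -A + (-A)ᴴ = Q * M * Qᴴ := by rw [conjTranspose_neg, ← neg_add, hA, neg_neg]
  have hnegu : -A *ᵥ u = -z • u := by rw [neg_mulVec, hu, neg_smul]
  simpa using re_pos_of_mulVec_eq_smul_of_add_conjTranspose_eq hnegA hM hnegu hQu

end Matrix

theorem spectrum_halfplane_of_dissipative_general
    {n m : ℕ} (Aξ : Matrix (Fin n) (Fin n) ℂ) (Q : Matrix (Fin n) (Fin m) ℂ)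
    (ξ ϑ : Matrix (Fin m) (Fin m) ℂ)
    (hdiss : Aξ + Aξᴴ = (2 : ℂ) • (Q * (ξ - ((2 : ℂ) • ϑ)⁻¹) * Qᴴ))
    (hctrl : ∀ (u : Fin n → ℂ) (z : ℂ), Aξ *ᵥ u = z • u → Qᴴ *ᵥ u = 0 → u = 0) :
    ((ξ - ((2 : ℂ) • ϑ)⁻¹).PosDef →
      ∀ (z : ℂ) (u : Fin n → ℂ), u ≠ 0 → Aξ *ᵥ u = z • u → 0 < z.re) ∧
    ((((2 : ℂ) • ϑ)⁻¹ - ξ).PosDef →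
      ∀ (z : ℂ) (u : Fin n → ℂ), u ≠ 0 → Aξ *ᵥ u = z • u → z.re < 0) ∧
    (((ξ - ((2 : ℂ) • ϑ)⁻¹).PosDef ∨ (((2 : ℂ) • ϑ)⁻¹ - ξ).PosDef) →
      ∀ (z : ℂ) (u : Fin n → ℂ), u ≠ 0 → Aξ *ᵥ u = z • u → z.re ≠ 0) := by
  have hQu {z : ℂ} {u : Fin n → ℂ} (hu : u ≠ 0) (heig : Aξ *ᵥ u = z • u) : Qᴴ *ᵥ u ≠ 0 :=
    fun h ↦ hu (hctrl u z heig h)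
  have htwo : (0 : ℂ) < 2 := two_pos
  have hright (hM : (ξ - ((2 : ℂ) • ϑ)⁻¹).PosDef) (z : ℂ) (u : Fin n → ℂ) (hu : u ≠ 0)
      (heig : Aξ *ᵥ u = z • u) : 0 < z.re := by
    refine re_pos_of_mulVec_eq_smul_of_add_conjTranspose_eq ?_ (hM.smul htwo) heig
      (hQu hu heig)
    rw [hdiss, Matrix.mul_smul, Matrix.smul_mul]
  have hleft (hM : (((2 : ℂ) • ϑ)⁻¹ - ξ).PosDef) (z : ℂ) (u : Fin n → ℂ) (hu : u ≠ 0)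
      (heig : Aξ *ᵥ u = z • u) : z.re < 0 := by
    refine re_neg_of_mulVec_eq_smul_of_add_conjTranspose_eq_neg ?_ (hM.smul htwo) heig
      (hQu hu heig)
    rw [hdiss, ← neg_sub, Matrix.mul_smul, Matrix.smul_mul, Matrix.mul_neg, Matrix.neg_mul,
      smul_neg]
  refine ⟨hright, hleft, ?_⟩
  rintro (hM | hM) z u hu heig
  · exact (hright hM z u hu heig).ne'
  · exact (hleft hM z u hu heig).ne

/-- If `A_ξ + A_ξ* = 2Q(ξ − (2ϑ)⁻¹)Q*` with `(A_ξ, Q)` controllable (no eigenvector of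
`A_ξ` in `Ker Q*`), then `ξ − (2ϑ)⁻¹ > 0` forces `sp(A_ξ)` into the open right half-plane
and `ξ − (2ϑ)⁻¹ < 0` forces it into the open left half-plane; in either case
`sp(A_ξ) ∩ iℝ = ∅`. -/
theorem spectrum_halfplane_of_dissipative
    {n m : ℕ} (Aξ : Matrix (Fin n) (Fin n) ℂ) (Q : Matrix (Fin n) (Fin m) ℂ)
    (ξ ϑ : Matrix (Fin m) (Fin m) ℂ) (hξ : ξ.IsHermitian) (hϑ : ϑ.PosDef)
    (hdiss : Aξ + Aξᴴ = (2 : ℂ) • (Q * (ξ - ((2 : ℂ) • ϑ)⁻¹) * Qᴴ))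
    (hctrl : ∀ (u : Fin n → ℂ) (z : ℂ), Aξ *ᵥ u = z • u → Qᴴ *ᵥ u = 0 → u = 0) :
    ((ξ - ((2 : ℂ) • ϑ)⁻¹).PosDef →
      ∀ (z : ℂ) (u : Fin n → ℂ), u ≠ 0 → Aξ *ᵥ u = z • u → 0 < z.re) ∧
    ((((2 : ℂ) • ϑ)⁻¹ - ξ).PosDef →
      ∀ (z : ℂ) (u : Fin n → ℂ), u ≠ 0 → Aξ *ᵥ u = z • u → z.re < 0) ∧
    (((ξ - ((2 : ℂ) • ϑ)⁻¹).PosDef ∨ (((2 : ℂ) • ϑ)⁻¹ - ξ).PosDef) →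
      ∀ (z : ℂ) (u : Fin n → ℂ), u ≠ 0 → Aξ *ᵥ u = z • u → z.re ≠ 0) :=
  spectrum_halfplane_of_dissipative_general Aξ Q ξ ϑ hdiss hctrl
end

section
/- Let g : D → ℝ be convex and differentiable on an open convex set D ⊆ Ξ, and let L = {η ∈ Ξ : ξ + λη ∈ D and g(ξ + λη) = g(ξ) for all ξ ∈ D, λ ∈ ℝ} be the set of directions of translation invariance. Then L ⊆ (∇g(D))^⊥. Conversely, if g is real analytic on D and unbounded-gradient on finite boundary points (|∇g(ξ)| → ∞ as ξ → ξ₀ ∈ ∂D), then every η ∈ (∇g(D))^⊥ satisfies ξ + ℝη ⊆ D and g is constant along ξ + ℝη; hence L = (∇g(D))^⊥. -/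
open scoped RealInnerProductSpace
open Filter Topology Metric

/-!
If `η` is an invariance direction, `t ↦ g (ξ + t • η)` is constant, so its derivative
`⟪∇g ξ, η⟫` vanishes. Conversely, let `η ⊥ ∇g(D)`. Then `g` is constant on every chord of `D` in
direction `η`. Pick a closed ball `B(ξ, r) ⊆ D` on which `g ≤ M`; at each point `x` of the line
`ξ + ℝη` inside `D`, the subgradient inequality tested at `ξ + r • ∇g x / ‖∇g x‖` gives
`r ‖∇g x‖ ≤ M - g ξ`. A bounded gradient cannot blow up, so the line never reaches the frontier
of `D`: `{t | ξ + t • η ∈ D}` is clopen in `ℝ`, hence all of `ℝ`.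
-/

lemma AffineMap.coe_lineMap_self_add {E : Type*} [AddCommGroup E] [Module ℝ E] (x v : E) :
    ⇑(AffineMap.lineMap x (x + v) : ℝ →ᵃ[ℝ] E) = fun s => x + s • v := by
  ext s
  simp [AffineMap.lineMap_apply_module', add_comm]

theorem closure_subset_of_tendsto_atTop_of_bounded {X : Type*} [TopologicalSpace X]
    {D S : Set X} {f : X → ℝ} {C : ℝ}
    (hf : ∀ x ∈ frontier D, Tendsto f (𝓝[D] x) atTop) (hSD : S ⊆ D) (hfS : ∀ x ∈ S, f x ≤ C) :
    closure S ⊆ D := by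
  intro x hx
  by_contra hxD
  have hfr : x ∈ frontier D := ⟨closure_mono hSD hx, fun h => hxD (interior_subset h)⟩
  have : (𝓝[S] x).NeBot := mem_closure_iff_nhdsWithin_neBot.1 hx
  obtain ⟨y, hy_gt, hy_le⟩ := (((hf x hfr).mono_left (nhdsWithin_mono x hSD)).eventually_gt_atTop
    C).and (eventually_nhdsWithin_of_forall hfS) |>.exists
  exact hy_gt.not_ge hy_le

section

variable {E : Type*} [NormedAddCommGroup E] [InnerProductSpace ℝ E]
  {D : Set E} {g : E → ℝ} {x y η : E}

section Complete

variable [CompleteSpace E]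

theorem DifferentiableAt.hasDerivAt_comp_add_smul {t : ℝ} (hg : DifferentiableAt ℝ g (x + t • η)) :
    HasDerivAt (fun s : ℝ => g (x + s • η)) ⟪gradient g (x + t • η), η⟫ t := by
  have hline : HasDerivAt (fun s : ℝ => x + s • η) η t := by
    simpa using ((hasDerivAt_id t).smul_const η).const_add x
  simpa [Function.comp_def] using hg.hasGradientAt.hasFDerivAt.comp_hasDerivAt t hline

theorem inner_gradient_eq_zero_of_forall_apply_add_smul_eq (hg : DifferentiableAt ℝ g x)
    (h : ∀ t : ℝ, g (x + t • η) = g x) : ⟪η, gradient g x⟫ = 0 := by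
  have hderiv := DifferentiableAt.hasDerivAt_comp_add_smul (t := 0) (η := η) (by simpa using hg)
  simp only [zero_smul, add_zero, h] at hderiv
  rw [real_inner_comm]
  exact hderiv.unique (hasDerivAt_const 0 (g x))

theorem ConvexOn.add_inner_gradient_le (hconv : ConvexOn ℝ D g) (hx : x ∈ D) (hy : y ∈ D)
    (hg : DifferentiableAt ℝ g x) : g x + ⟪gradient g x, y - x⟫ ≤ g y := by
  have hline := AffineMap.coe_lineMap_self_add x (y - x)
  have hconv_line := hconv.comp_affineMap (AffineMap.lineMap x (x + (y - x)))
  rw [hline] at hconv_line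
  have hderiv := DifferentiableAt.hasDerivAt_comp_add_smul (t := 0) (η := y - x) (by simpa using hg)
  simp only [zero_smul, add_zero] at hderiv
  have hslope := hconv_line.le_slope_of_hasDerivAt (x := 0) (y := 1) (by simpa using hx)
    (by simpa using hy) zero_lt_one hderiv
  simp only [slope_def_field, Function.comp_apply, zero_smul, one_smul, add_zero,
    add_sub_cancel, sub_zero, div_one] at hslope
  linarith

theorem ConvexOn.add_inner_gradient_add_mul_norm_le {c : E} {r M : ℝ} (hconv : ConvexOn ℝ D g)
    (hx : x ∈ D) (hg : DifferentiableAt ℝ g x) (hr : 0 ≤ r) (hball : closedBall c r ⊆ D)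
    (hM : ∀ y ∈ closedBall c r, g y ≤ M) :
    g x + ⟪gradient g x, c - x⟫ + r * ‖gradient g x‖ ≤ M := by
  rcases eq_or_ne (gradient g x) 0 with hv | hv
  · have hsub := hconv.add_inner_gradient_le hx (hball (mem_closedBall_self hr)) hg
    simp only [hv, norm_zero, mul_zero, add_zero, inner_zero_left] at hsub ⊢
    exact hsub.trans (hM c (mem_closedBall_self hr))
  set v := gradient g x
  -- test the subgradient inequality at the point of the ball furthest in the direction of `v`
  have hvn : 0 < ‖v‖ := norm_pos_iff.2 hv
  set y := c + (r / ‖v‖) • v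
  have hy : y ∈ closedBall c r := by
    rw [mem_closedBall, dist_eq_norm]
    simp [y, norm_smul, abs_of_nonneg hr, hvn.ne']
  have hinner : ⟪v, y - x⟫ = ⟪v, c - x⟫ + r * ‖v‖ := by
    rw [show y - x = (c - x) + (r / ‖v‖) • v by simp only [y]; abel, inner_add_right,
      real_inner_smul_right, real_inner_self_eq_norm_sq]
    field_simp
  have hsub := hconv.add_inner_gradient_le hx (hball hy) hg
  linarith [hM y hy]

theorem apply_add_smul_eq_of_inner_gradient_eq_zero (hD : IsOpen D) (hDc : Convex ℝ D)
    (hdiff : DifferentiableOn ℝ g D) (h : ∀ z ∈ D, ⟪η, gradient g z⟫ = 0) (hx : x ∈ D) {t : ℝ}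
    (ht : x + t • η ∈ D) : g (x + t • η) = g x := by
  set I := (fun s : ℝ => x + s • η) ⁻¹' D
  have hI_open : IsOpen I := hD.preimage (by fun_prop)
  have hI_conv : Convex ℝ I := by
    simpa only [I, AffineMap.coe_lineMap_self_add] using hDc.affine_preimage
      (AffineMap.lineMap x (x + η))
  have hderiv (s : ℝ) (hs : s ∈ I) : HasDerivAt (fun s : ℝ => g (x + s • η)) 0 s := by
    have hd := (hdiff.differentiableAt (hD.mem_nhds hs)).hasDerivAt_comp_add_smul
    rwa [real_inner_comm, h _ hs] at hd
  simpa using hI_open.is_const_of_deriv_eq_zero hI_conv.isPreconnected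
    (fun s hs => (hderiv s hs).differentiableAt.differentiableWithinAt)
    (fun s hs => (hderiv s hs).deriv) ht (show (0 : ℝ) ∈ I by simpa [I] using hx)

end Complete

theorem ConvexOn.add_smul_mem_of_inner_gradient_eq_zero [ProperSpace E] (hD : IsOpen D)
    (hDc : Convex ℝ D) (hdiff : DifferentiableOn ℝ g D) (hconv : ConvexOn ℝ D g)
    (hblow : ∀ z ∈ frontier D, Tendsto (fun z => ‖gradient g z‖) (𝓝[D] z) atTop)
    (h : ∀ z ∈ D, ⟪η, gradient g z⟫ = 0) (hx : x ∈ D) (t : ℝ) : x + t • η ∈ D := by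
  obtain ⟨r, hr, hball⟩ := nhds_basis_closedBall.mem_iff.1 (hD.mem_nhds hx)
  obtain ⟨M, hM⟩ := (isCompact_closedBall x r).bddAbove_image (hdiff.continuousOn.mono hball)
  set line := fun s : ℝ => x + s • η
  set S := D ∩ Set.range line
  have hbound : ∀ z ∈ S, ‖gradient g z‖ ≤ (M - g x) / r := by
    rintro _ ⟨hz, s, rfl⟩
    have hdz := hdiff.differentiableAt (hD.mem_nhds hz)
    have key := hconv.add_inner_gradient_add_mul_norm_le hz hdz hr.le hball
      (fun y hy => hM ⟨y, hy, rfl⟩)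
    rw [apply_add_smul_eq_of_inner_gradient_eq_zero hD hDc hdiff h hx hz,
      show x - (x + s • η) = -(s • η) by abel, inner_neg_right, real_inner_smul_right,
      real_inner_comm, h _ hz] at key
    rw [le_div_iff₀ hr]
    linarith
  set I := line ⁻¹' D
  have hI_closed : IsClosed I := isClosed_of_closure_subset <| calc
    closure I = closure (line ⁻¹' S) := by simp [I, S]
    _ ⊆ line ⁻¹' closure S := (by fun_prop : Continuous line).closure_preimage_subset S
    _ ⊆ I := Set.preimage_mono
      (closure_subset_of_tendsto_atTop_of_bounded hblow Set.inter_subset_left hbound)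
  have hI_univ : I = Set.univ :=
    IsClopen.eq_univ ⟨hI_closed, hD.preimage (by fun_prop)⟩ ⟨0, by simpa [I, line] using hx⟩
  exact (hI_univ ▸ Set.mem_univ t : t ∈ I)

end

theorem lineality_eq_gradient_perp_general
    {Ξ : Type*} [NormedAddCommGroup Ξ] [InnerProductSpace ℝ Ξ] [FiniteDimensional ℝ Ξ]
    (D : Set Ξ) (hD : IsOpen D) (hDc : Convex ℝ D)
    (g : Ξ → ℝ) (hdiff : DifferentiableOn ℝ g D) (hconv : ConvexOn ℝ D g)
    (hblow : ∀ ξ₀ ∈ frontier D, Filter.Tendsto (fun ξ => ‖gradient g ξ‖)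
      (nhdsWithin ξ₀ D) Filter.atTop) :
    {η : Ξ | ∀ ξ ∈ D, ∀ l : ℝ, ξ + l • η ∈ D ∧ g (ξ + l • η) = g ξ}
      = {η : Ξ | ∀ ξ ∈ D, ⟪η, gradient g ξ⟫ = 0} := by
  ext η
  constructor
  · intro h ξ hξ
    exact inner_gradient_eq_zero_of_forall_apply_add_smul_eq
      (hdiff.differentiableAt (hD.mem_nhds hξ)) fun l => (h ξ hξ l).2
  · intro h ξ hξ l
    have hl := hconv.add_smul_mem_of_inner_gradient_eq_zero hD hDc hdiff hblow h hξ l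
    exact ⟨hl, apply_add_smul_eq_of_inner_gradient_eq_zero hD hDc hdiff h hξ hl⟩

/-- The lineality space of invariance directions of a convex differentiable function `g` on
an open convex set `D` equals the orthogonal complement of `∇g(D)`, provided `g` is real
analytic on `D` and its gradient blows up at every finite boundary point of `D`. -/
theorem lineality_eq_gradient_perp
    {Ξ : Type*} [NormedAddCommGroup Ξ] [InnerProductSpace ℝ Ξ] [FiniteDimensional ℝ Ξ]
    (D : Set Ξ) (hD : IsOpen D) (hDc : Convex ℝ D) (hDne : D.Nonempty)
    (g : Ξ → ℝ) (hdiff : DifferentiableOn ℝ g D) (hconv : ConvexOn ℝ D g)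
    (hanal : AnalyticOn ℝ g D)
    (hblow : ∀ ξ₀ ∈ frontier D, Filter.Tendsto (fun ξ => ‖gradient g ξ‖)
      (nhdsWithin ξ₀ D) Filter.atTop) :
    {η : Ξ | ∀ ξ ∈ D, ∀ l : ℝ, ξ + l • η ∈ D ∧ g (ξ + l • η) = g ξ}
      = {η : Ξ | ∀ ξ ∈ D, ⟪η, gradient g ξ⟫ = 0} :=
  lineality_eq_gradient_perp_general D hD hDc g hdiff hconv hblow
end

section
/- Let g : D → ℝ be differentiable on an open convex set D in a finite-dimensional inner-product space, symmetric about a point c (g(2c − ξ) = g(ξ) for all ξ ∈ D, with 2c − ξ ∈ D). Let I(φ) = sup_{ξ∈D}(⟨ξ,φ⟩ − g(ξ)). If φ = ∇g(ξ) and −φ = ∇g(2c − ξ) for some ξ with both ξ and 2c − ξ in D, then I(−φ) = I(φ) − 2⟨c, φ⟩. -/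
open scoped RealInnerProductSpace

/-! At a point `ξ` with `∇g(ξ) = φ`, the tangent-plane inequality of the convex function `g`
says exactly that `ξ` maximises `⟨·, φ⟩ − g`, so `I(φ) = ⟨ξ, φ⟩ − g(ξ)`. Apply this at `ξ₀`
for `φ` and at `2c − ξ₀` for `−φ`; since `g(2c − ξ₀) = g(ξ₀)`, the two values differ by
`⟨2c − ξ₀, −φ⟩ − ⟨ξ₀, φ⟩ = −2⟨c, φ⟩`. -/

section TangentPlane

variable {E : Type*} [NormedAddCommGroup E] [NormedSpace ℝ E]
  {D : Set E} {g : E → ℝ} {g' : E →L[ℝ] ℝ} {x y : E}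

theorem ConvexOn.add_fderiv_sub_le (hconv : ConvexOn ℝ D g) (hx : x ∈ D) (hy : y ∈ D)
    (hg : HasFDerivAt g g' x) : g x + g' (y - x) ≤ g y := by
  set L : ℝ →ᵃ[ℝ] E := AffineMap.lineMap x y
  have hL0 : L 0 = x := AffineMap.lineMap_apply_zero x y
  have hL1 : L 1 = y := AffineMap.lineMap_apply_one x y
  have hconvL : ConvexOn ℝ (L ⁻¹' D) (g ∘ L) := hconv.comp_affineMap L
  have hderiv : HasDerivAt (g ∘ L) (g' (y - x)) 0 :=
    (hL0 ▸ hg).comp_hasDerivAt 0 AffineMap.hasDerivAt_lineMap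
  have hslope := hconvL.le_slope_of_hasDerivAt (by simpa [hL0] using hx)
    (by simpa [hL1] using hy) zero_lt_one hderiv
  rw [slope_def_field, Function.comp_apply, Function.comp_apply, hL0, hL1] at hslope
  linarith

end TangentPlane

section Legendre

variable {F : Type*} [NormedAddCommGroup F] [InnerProductSpace ℝ F] [CompleteSpace F]
  {D : Set F} {g : F → ℝ} {ψ x : F}

theorem ConvexOn.add_inner_sub_le_of_hasGradientAt (hconv : ConvexOn ℝ D g) (hx : x ∈ D)
    {y : F} (hy : y ∈ D) (hg : HasGradientAt g ψ x) : g x + ⟪ψ, y - x⟫ ≤ g y := by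
  simpa using hconv.add_fderiv_sub_le hx hy hg.hasFDerivAt

theorem ConvexOn.isGreatest_inner_sub_of_hasGradientAt (hconv : ConvexOn ℝ D g) (hx : x ∈ D)
    (hg : HasGradientAt g ψ x) :
    IsGreatest ((fun ξ => ⟪ξ, ψ⟫ - g ξ) '' D) (⟪x, ψ⟫ - g x) := by
  refine ⟨⟨x, hx, rfl⟩, ?_⟩
  rintro _ ⟨y, hy, rfl⟩
  have htangent := hconv.add_inner_sub_le_of_hasGradientAt hx hy hg
  rw [inner_sub_right, real_inner_comm y ψ, real_inner_comm x ψ] at htangent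
  dsimp only
  linarith

end Legendre

theorem fluctuation_relation_of_central_symmetry_general
    {Ξ : Type*} [NormedAddCommGroup Ξ] [InnerProductSpace ℝ Ξ] [FiniteDimensional ℝ Ξ]
    (D : Set Ξ) (hD : IsOpen D)
    (g : Ξ → ℝ) (hdiff : DifferentiableOn ℝ g D) (hconv : ConvexOn ℝ D g)
    (c : Ξ) (hsym : ∀ ξ ∈ D, (2 : ℝ) • c - ξ ∈ D ∧ g ((2 : ℝ) • c - ξ) = g ξ)
    (I : Ξ → ℝ) (hI : ∀ φ : Ξ, I φ = sSup ((fun ξ => ⟪ξ, φ⟫ - g ξ) '' D))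
    (φ ξ₀ : Ξ) (hξ₀ : ξ₀ ∈ D)
    (hgrad : gradient g ξ₀ = φ)
    (hgrad' : gradient g ((2 : ℝ) • c - ξ₀) = -φ) :
    I (-φ) = I φ - 2 * ⟪c, φ⟫ := by
  have hasGradient : ∀ ξ ∈ D, HasGradientAt g (gradient g ξ) ξ := fun ξ hξ =>
    ((hdiff ξ hξ).differentiableAt (hD.mem_nhds hξ)).hasGradientAt
  have I_eq : ∀ ψ, ∀ ξ ∈ D, gradient g ξ = ψ → I ψ = ⟪ξ, ψ⟫ - g ξ := fun ψ ξ hξ hψ =>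
    (hI ψ).trans (hconv.isGreatest_inner_sub_of_hasGradientAt hξ (hψ ▸ hasGradient ξ hξ)).csSup_eq
  obtain ⟨hmem, hval⟩ := hsym ξ₀ hξ₀
  rw [I_eq (-φ) _ hmem hgrad', I_eq φ ξ₀ hξ₀ hgrad, hval, inner_neg_right, inner_sub_left,
    real_inner_smul_left]
  ring

/-- Fluctuation relation for the Legendre transform of a centrally symmetric convex
function: if `g(2c − ξ) = g(ξ)` on the open convex set `D`, `I(φ) = sup_{ξ∈D}(⟨ξ,φ⟩ − g(ξ))`,
and `φ = ∇g(ξ₀)`, `−φ = ∇g(2c − ξ₀)` with `ξ₀, 2c − ξ₀ ∈ D`, then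
`I(−φ) = I(φ) − 2⟨c, φ⟩`. -/
theorem fluctuation_relation_of_central_symmetry
    {Ξ : Type*} [NormedAddCommGroup Ξ] [InnerProductSpace ℝ Ξ] [FiniteDimensional ℝ Ξ]
    (D : Set Ξ) (hD : IsOpen D) (hDc : Convex ℝ D)
    (g : Ξ → ℝ) (hdiff : DifferentiableOn ℝ g D) (hconv : ConvexOn ℝ D g)
    (c : Ξ) (hsym : ∀ ξ ∈ D, (2 : ℝ) • c - ξ ∈ D ∧ g ((2 : ℝ) • c - ξ) = g ξ)
    (I : Ξ → ℝ) (hI : ∀ φ : Ξ, I φ = sSup ((fun ξ => ⟪ξ, φ⟫ - g ξ) '' D))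
    (φ ξ₀ : Ξ) (hξ₀ : ξ₀ ∈ D)
    (hgrad : gradient g ξ₀ = φ)
    (hgrad' : gradient g ((2 : ℝ) • c - ξ₀) = -φ) :
    I (-φ) = I φ - 2 * ⟪c, φ⟫ :=
  fluctuation_relation_of_central_symmetry_general D hD g hdiff hconv c hsym I hI φ ξ₀ hξ₀ hgrad
    hgrad'
end
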